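/- arXiv:1811.12294 — 4 statements merged into one kernel-verified Lean document; each statement's English description precedes it below -/
import Mathlib

section
/- The composition functor Comp is full: let (P,p) be an F-path of length n and (Q,q) an F-path of length m with n ≤ m, where Comp(P,p) := F^n(!_{P_n}) ∘ F^{n-1}(p_{n-1}) ∘ ⋯ ∘ F(p_1) ∘ p_0 : I → F^n 1. If F^n(!_{F^{m-n}1}) ∘ Comp(Q,q) = Comp(P,p) (i.e. Comp(P,p) ≤ Comp(Q,q) in the path poset), then there exists a path morphism (P,p) → (Q,q). -/
open CategoryTheory CategoryTheory.Limits

universe v u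

variable {C : Type u} [Category.{v} C]

def Precise (F : C ⥤ C) {S R : C} (s : S ⟶ F.obj R) : Prop :=
  ∀ {A D : C} (f : S ⟶ F.obj A) (g : R ⟶ D) (h : A ⟶ D),
    f ≫ F.map h = s ≫ F.map g → ∃ d : R ⟶ A, s ≫ F.map d = f ∧ d ≫ h = g

structure FPath (F : C ⥤ C) (I : C) (n : ℕ) where
  P : ℕ → C
  hP0 : P 0 = I
  p : ∀ k, k < n → (P k ⟶ F.obj (P (k + 1)))
  precise : ∀ k (h : k < n), Precise F (p k h)

def pow (F : C ⥤ C) : ℕ → C ⥤ C :=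
  fun n => Nat.rec (𝟭 C) (fun _ G => F ⋙ G) n

def comps {F : C ⥤ C} {I : C} {n : ℕ} (Pp : FPath F I n) :
    ∀ k, k ≤ n → (I ⟶ (pow F k).obj (Pp.P k))
  | 0, _ => eqToHom Pp.hP0.symm
  | (k + 1), h =>
      comps Pp k (Nat.le_of_succ_le h) ≫ (pow F k).map (Pp.p k (Nat.lt_of_succ_le h))

noncomputable def Comp [HasTerminal C] {F : C ⥤ C} {I : C} {n : ℕ} (Pp : FPath F I n) :
    I ⟶ (pow F n).obj (⊤_ C) :=
  comps Pp n le_rfl ≫ (pow F n).map (terminal.from (Pp.P n))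

lemma pow_add_obj (F : C ⥤ C) (n : ℕ) : ∀ (k : ℕ) (X : C),
    (pow F (n + k)).obj X = (pow F n).obj ((pow F k).obj X)
  | 0, _ => rfl
  | (k + 1), X => pow_add_obj F n k (F.obj X)

lemma pow_sub_obj (F : C ⥤ C) {n m : ℕ} (h : n ≤ m) (X : C) :
    (pow F m).obj X = (pow F n).obj ((pow F (m - n)).obj X) := by
  conv_lhs => rw [← Nat.add_sub_cancel' h]
  exact pow_add_obj F n (m - n) X
/-! ### Auxiliary material -/

lemma pow_comm (F : C ⥤ C) : ∀ (j : ℕ) (X : C),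
    F.obj ((pow F j).obj X) = (pow F j).obj (F.obj X)
  | 0, _ => rfl
  | (j + 1), X => pow_comm F j (F.obj X)

lemma key_general (G : C ⥤ C) {A B : C} (p : A = B) {Z : C} (q : G.obj B = Z)
    (r : G.obj A = Z) : G.map (eqToHom p) ≫ eqToHom q = eqToHom r := by
  subst p; subst q; simp

/-- The "tail" of a path: the composition of the path maps from position `k`
up to position `n` (where `k + j = n`), followed by the map to the terminal object. -/
noncomputable def tailAux [HasTerminal C] {F : C ⥤ C} {I : C} {m : ℕ} (Qq : FPath F I m)
    {n : ℕ} (hnm : n ≤ m) :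
    ∀ (j k : ℕ), k + j = n → (Qq.P k ⟶ (pow F j).obj (⊤_ C))
  | 0, _, _ => terminal.from _
  | (j + 1), k, h =>
      Qq.p k (by omega) ≫ F.map (tailAux Qq hnm j (k + 1) (by omega)) ≫
        eqToHom (pow_comm F j (⊤_ C))

lemma comps_tail [HasTerminal C] {F : C ⥤ C} {I : C} {m : ℕ} (Qq : FPath F I m)
    {n : ℕ} (hnm : n ≤ m) :
    ∀ (j k : ℕ) (h : k + j = n) (hk : k ≤ m)
      (E : (pow F k).obj ((pow F j).obj (⊤_ C)) = (pow F n).obj (⊤_ C)),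
      comps Qq k hk ≫ (pow F k).map (tailAux Qq hnm j k h) ≫ eqToHom E
        = comps Qq n hnm ≫ (pow F n).map (terminal.from (Qq.P n)) := by
  intro j
  induction j with
  | zero =>
      intro k h hk E
      obtain rfl : k = n := h
      show comps Qq k hnm ≫ (pow F k).map (terminal.from (Qq.P k)) ≫ 𝟙 _
          = comps Qq k hnm ≫ (pow F k).map (terminal.from (Qq.P k))
      simp
  | succ j ih =>
      intro k h hk E
      have E' : (pow F (k + 1)).obj ((pow F j).obj (⊤_ C)) = (pow F n).obj (⊤_ C) :=
        (congrArg (pow F k).obj (pow_comm F j (⊤_ C))).trans E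
      have key : (pow F k).map (eqToHom (pow_comm F j (⊤_ C))) ≫ eqToHom E = eqToHom E' :=
        key_general (pow F k) (pow_comm F j (⊤_ C)) E E'
      have ihk := ih (k + 1) (by omega) (by omega) E'
      rw [show comps Qq (k + 1) (by omega : k + 1 ≤ m)
          = comps Qq k hk ≫ (pow F k).map (Qq.p k (by omega)) from rfl] at ihk
      simp only [tailAux, Functor.map_comp, Category.assoc]
      erw [key]
      erw [Category.assoc] at ihk
      exact ihk

lemma comps_ext [HasTerminal C] {F : C ⥤ C} {I : C} {m : ℕ} (Qq : FPath F I m)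
    {n : ℕ} (hn : n ≤ m) :
    ∀ (j k : ℕ) (h : n + j = k) (hk : k ≤ m),
      ∃ u : Qq.P n ⟶ (pow F j).obj (Qq.P k),
        ∀ (Z : C) (w : Qq.P k ⟶ Z)
          (E : (pow F k).obj Z = (pow F n).obj ((pow F j).obj Z)),
          comps Qq k hk ≫ (pow F k).map w ≫ eqToHom E
            = comps Qq n hn ≫ (pow F n).map (u ≫ (pow F j).map w) := by
  intro j
  induction j with
  | zero =>
      intro k h hk
      obtain rfl : n = k := h
      refine ⟨𝟙 (Qq.P n), ?_⟩
      intro Z w E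
      show comps Qq n hn ≫ (pow F n).map w ≫ 𝟙 _
          = comps Qq n hn ≫ (pow F n).map (𝟙 (Qq.P n) ≫ w)
      simp
  | succ j ih =>
      intro k h hk
      obtain rfl : n + j + 1 = k := h
      obtain ⟨u, hu⟩ := ih (n + j) rfl (by omega)
      refine ⟨u ≫ (pow F j).map (Qq.p (n + j) (by omega)), ?_⟩
      intro Z w E
      have hu' := hu (F.obj Z) (Qq.p (n + j) (by omega) ≫ F.map w) E
      rw [show comps Qq (n + j + 1) hk
          = comps Qq (n + j) (by omega) ≫ (pow F (n + j)).map (Qq.p (n + j) (by omega))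
          from rfl]
      simp only [Functor.map_comp, Category.assoc] at hu' ⊢
      erw [Category.assoc, Functor.map_comp, Category.assoc]
      exact hu'

/-- The inductive construction of the path morphism, using preciseness. -/
lemma build [HasTerminal C] {F : C ⥤ C} {I : C} {n m : ℕ} (hnm : n ≤ m)
    (Pp : FPath F I n) (Qq : FPath F I m) :
    ∀ (j k : ℕ) (h : k + j = n) (φk : Pp.P k ⟶ Qq.P k),
      φk ≫ tailAux Qq hnm j k h = tailAux Pp le_rfl j k h →
      ∃ φ : ∀ l, k ≤ l → l ≤ n → (Pp.P l ⟶ Qq.P l),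
        φ k le_rfl (by omega) = φk ∧
        ∀ l (h1 : k ≤ l) (h2 : l < n),
          φ l h1 h2.le ≫ Qq.p l (lt_of_lt_of_le h2 hnm)
            = Pp.p l h2 ≫ F.map (φ (l + 1) (by omega) h2) := by
  intro j
  induction j with
  | zero =>
      intro k h φk _
      obtain rfl : k = n := h
      refine ⟨fun l h1 h2 => eqToHom (by rw [le_antisymm h2 h1]) ≫ φk ≫
        eqToHom (by rw [le_antisymm h2 h1]), by simp, ?_⟩
      intro l h1 h2
      omega
  | succ j ih =>
      intro k h φk inv
      simp only [tailAux, ← Category.assoc] at inv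
      have inv' := (cancel_mono (eqToHom (pow_comm F j (⊤_ C)))).mp inv
      obtain ⟨d, hd1, hd2⟩ := Pp.precise k (by omega)
        (φk ≫ Qq.p k (by omega)) (tailAux Pp le_rfl j (k + 1) (by omega))
        (tailAux Qq hnm j (k + 1) (by omega)) inv'
      obtain ⟨φ', hφ0, hφs⟩ := ih (k + 1) (by omega) d hd2
      refine ⟨fun l h1 h2 =>
        if hl : l = k then
          eqToHom (by rw [hl]) ≫ φk ≫ eqToHom (by rw [hl])
        else φ' l (by omega) h2, ?_, ?_⟩
      · simp
      · intro l h1 h2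
        by_cases hl : l = k
        · subst hl
          have hne : l + 1 ≠ l := by omega
          simp only [dif_pos rfl, dif_neg hne, eqToHom_refl, Category.id_comp,
            Category.comp_id]
          rw [hφ0]
          exact hd1.symm
        · have hne : l + 1 ≠ k := by omega
          simp only [dif_neg hl, dif_neg hne]
          exact hφs l (by omega) h2

theorem comp_full [HasTerminal C] (F : C ⥤ C) (I : C) {n m : ℕ} (hnm : n ≤ m)
    (Pp : FPath F I n) (Qq : FPath F I m)
    (hle : Comp Qq ≫ eqToHom (pow_sub_obj F hnm (⊤_ C)) ≫
        (pow F n).map (terminal.from ((pow F (m - n)).obj (⊤_ C))) = Comp Pp) :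
    ∃ φ : ∀ k, k ≤ n → (Pp.P k ⟶ Qq.P k),
      φ 0 (Nat.zero_le n) = eqToHom (Pp.hP0.trans Qq.hP0.symm) ∧
      ∀ k (hk : k < n),
        φ k hk.le ≫ Qq.p k (lt_of_lt_of_le hk hnm) =
          Pp.p k hk ≫ F.map (φ (k + 1) hk) := by
  -- Step 1: `Comp Pp` is the tail composition of `Pp` from position 0.
  have hA : eqToHom Pp.hP0.symm ≫ tailAux Pp le_rfl n 0 (Nat.zero_add n) ≫ 𝟙 _
      = comps Pp n le_rfl ≫ (pow F n).map (terminal.from (Pp.P n)) :=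
    comps_tail Pp le_rfl n 0 (Nat.zero_add n) (Nat.zero_le n) rfl
  -- Step 2: similarly for the truncated tail of `Qq`.
  have hB : eqToHom Qq.hP0.symm ≫ tailAux Qq hnm n 0 (Nat.zero_add n) ≫ 𝟙 _
      = comps Qq n hnm ≫ (pow F n).map (terminal.from (Qq.P n)) :=
    comps_tail Qq hnm n 0 (Nat.zero_add n) (le_trans (Nat.zero_le n) hnm) rfl
  -- Step 3: the LHS of `hle` equals `comps Qq n ≫ F^n !`.
  obtain ⟨u, hu⟩ := comps_ext Qq hnm (m - n) m (by omega) le_rfl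
  have hu' := hu (⊤_ C) (terminal.from (Qq.P m)) (pow_sub_obj F hnm (⊤_ C))
  have hC : Comp Qq ≫ eqToHom (pow_sub_obj F hnm (⊤_ C)) ≫
      (pow F n).map (terminal.from ((pow F (m - n)).obj (⊤_ C)))
      = comps Qq n hnm ≫ (pow F n).map (terminal.from (Qq.P n)) := by
    show (comps Qq m le_rfl ≫ (pow F m).map (terminal.from (Qq.P m))) ≫ _ ≫ _ = _
    rw [Category.assoc]
    rw [show comps Qq m le_rfl ≫ (pow F m).map (terminal.from (Qq.P m)) ≫
        eqToHom (pow_sub_obj F hnm (⊤_ C)) ≫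
          (pow F n).map (terminal.from ((pow F (m - n)).obj (⊤_ C)))
      = (comps Qq m le_rfl ≫ (pow F m).map (terminal.from (Qq.P m)) ≫
          eqToHom (pow_sub_obj F hnm (⊤_ C))) ≫
          (pow F n).map (terminal.from ((pow F (m - n)).obj (⊤_ C))) by
        simp only [Category.assoc]]
    rw [hu']
    rw [Category.assoc, ← Functor.map_comp]
    congr 2
    apply terminal.hom_ext
  -- Step 4: the invariant at position 0.
  have hinv : eqToHom (Pp.hP0.trans Qq.hP0.symm) ≫ tailAux Qq hnm n 0 (Nat.zero_add n)
      = tailAux Pp le_rfl n 0 (Nat.zero_add n) := by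
    have h1 : eqToHom Qq.hP0.symm ≫ tailAux Qq hnm n 0 (Nat.zero_add n)
        = eqToHom Pp.hP0.symm ≫ tailAux Pp le_rfl n 0 (Nat.zero_add n) := by
      simp only [Category.comp_id] at hA hB
      rw [hB, ← hC, hle,
        show Comp Pp = comps Pp n le_rfl ≫ (pow F n).map (terminal.from (Pp.P n))
          from rfl, ← hA]
    have h2 := eqToHom Pp.hP0 ≫= h1
    simp only [← Category.assoc, eqToHom_trans] at h2 ⊢
    rw [h2]
    simp
  -- Step 5: build the path morphism.
  obtain ⟨φ, hφ0, hφs⟩ := build hnm Pp Qq n 0 (Nat.zero_add n)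
    (eqToHom (Pp.hP0.trans Qq.hP0.symm)) hinv
  exact ⟨fun k hk => φ k (Nat.zero_le k) hk, hφ0, fun k hk => hφs k (Nat.zero_le k) hk⟩
end

section
/- The composition functor Comp is surjective on objects: if F admits precise factorizations w.r.t. S and I ∈ S, then for every n and every morphism u : I → F^n 1 there exists an F-path (P,p) of length n with all P_k ∈ S such that Comp(P,p) = u, where Comp(P,p) := F^n(!_{P_n}) ∘ F^{n-1}(p_{n-1}) ∘ ⋯ ∘ p_0 : I → F^n 1. -/
open CategoryTheory CategoryTheory.Limits

universe v u

variable {C : Type u} [Category.{v} C]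

lemma pow_succ_obj' (F : C ⥤ C) (n : ℕ) (X : C) :
    (pow F (n + 1)).obj X = (pow F n).obj (F.obj X) := rfl

lemma pow_succ_map' (F : C ⥤ C) (n : ℕ) {X Y : C} (g : X ⟶ Y) :
    (pow F (n + 1)).map g = (pow F n).map (F.map g) := rfl

lemma precise_eqToHom_comp {F : C ⥤ C} {S S' R R' : C} (s : S ⟶ F.obj R)
    (hs : Precise F s) (h1 : S' = S) (h2 : R = R') :
    Precise F (eqToHom h1 ≫ s ≫ F.map (eqToHom h2)) := by
  subst h1; subst h2
  have he : eqToHom rfl ≫ s ≫ F.map (eqToHom rfl) = s := by simp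
  rw [he]; exact @hs

def FPath.extend {F : C ⥤ C} {I : C} {n : ℕ} (Pp : FPath F I n) (Y : C)
    (f : Pp.P n ⟶ F.obj Y) (hf : Precise F f) : FPath F I (n + 1) where
  P := fun k => if k < n + 1 then Pp.P k else Y
  hP0 := by simpa using Pp.hP0
  p := fun k hk =>
    if hkn : k < n then
      eqToHom (by simp [hk]) ≫ Pp.p k hkn ≫
        F.map (eqToHom (by simp [Nat.succ_lt_succ hkn]))
    else
      eqToHom (by
        have hk' : k = n := by omega
        subst hk'; simp) ≫ f ≫ F.map (eqToHom (by
        have hk' : k = n := by omega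
        subst hk'; simp))
  precise := fun k hk => by
    by_cases hkn : k < n
    · rw [dif_pos hkn]; exact precise_eqToHom_comp _ (Pp.precise _ _) _ _
    · rw [dif_neg hkn]; exact precise_eqToHom_comp _ hf _ _

lemma FPath.extend_P_eq {F : C ⥤ C} {I : C} {n : ℕ} (Pp : FPath F I n) (Y : C)
    (f : Pp.P n ⟶ F.obj Y) (hf : Precise F f) {k : ℕ} (hk : k ≤ n) :
    (Pp.extend Y f hf).P k = Pp.P k := if_pos (Nat.lt_succ_of_le hk)

lemma FPath.extend_P_last {F : C ⥤ C} {I : C} {n : ℕ} (Pp : FPath F I n) (Y : C)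
    (f : Pp.P n ⟶ F.obj Y) (hf : Precise F f) :
    (Pp.extend Y f hf).P (n + 1) = Y := if_neg (lt_irrefl _)

lemma comps_extend {F : C ⥤ C} {I : C} {n : ℕ} (Pp : FPath F I n) (Y : C)
    (f : Pp.P n ⟶ F.obj Y) (hf : Precise F f) :
    ∀ (k : ℕ) (hk : k ≤ n),
      comps (Pp.extend Y f hf) k (hk.trans (Nat.le_succ n)) =
        comps Pp k hk ≫
          eqToHom (congrArg (pow F k).obj (Pp.extend_P_eq Y f hf hk).symm)
  | 0, hk => by
      simp [comps, eqToHom_trans]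
      exact (eqToHom_trans _ _).symm
  | (k + 1), hk => by
      have hkn : k < n := Nat.lt_of_succ_le hk
      have hk' : k ≤ n := le_of_lt hkn
      rw [comps, comps, comps_extend Pp Y f hf k hk']
      have hp : (Pp.extend Y f hf).p k (Nat.lt_succ_of_le hk') =
          eqToHom (Pp.extend_P_eq Y f hf hk') ≫ Pp.p k hkn ≫
            F.map (eqToHom (Pp.extend_P_eq Y f hf hkn).symm) := dif_pos hkn
      rw [hp]
      simp [eqToHom_map, eqToHom_trans]
      have key : ∀ {X X' Z W : C} (c : I ⟶ X) (a : X = X') (b : X' = X) (M : X ⟶ Z)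
          (e1 e2 : Z = W), (c ≫ eqToHom a) ≫ eqToHom b ≫ M ≫ eqToHom e1 = (c ≫ M) ≫ eqToHom e2 := by
        intros; subst_vars; simp
      exact key _ _ _ _ _ _

lemma aux_surjective (F : C ⥤ C) (S : Set C)
    (hF : ∀ {X Y : C} (f : X ⟶ F.obj Y), X ∈ S →
      ∃ (Y' : C) (h : Y' ⟶ Y) (f' : X ⟶ F.obj Y'),
        Y' ∈ S ∧ Precise F f' ∧ f' ≫ F.map h = f) :
    ∀ (n : ℕ) (I : C), I ∈ S → ∀ (X : C) (u : I ⟶ (pow F n).obj X),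
      ∃ (Pp : FPath F I n) (e : Pp.P n ⟶ X),
        (∀ k, k ≤ n → Pp.P k ∈ S) ∧
          comps Pp n le_rfl ≫ (pow F n).map e = u := by
  intro n
  induction n with
  | zero =>
      intro I hI X u
      refine ⟨⟨fun _ => I, rfl, fun k h => absurd h (Nat.not_lt_zero k),
        fun k h => absurd h (Nat.not_lt_zero k)⟩, u, fun k hk => hI, ?_⟩
      simp [comps]
      exact Category.id_comp _
  | succ n ih =>
      intro I hI X u
      obtain ⟨Pp, e, hS, hcomp⟩ := ih I hI (F.obj X) u
      obtain ⟨Y', h, f', hY'S, hf'prec, hfact⟩ := hF e (hS n le_rfl)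
      refine ⟨Pp.extend Y' f' hf'prec,
        eqToHom (Pp.extend_P_last Y' f' hf'prec) ≫ h, ?_, ?_⟩
      · intro k hk
        by_cases hk' : k ≤ n
        · rw [Pp.extend_P_eq Y' f' hf'prec hk']
          exact hS k hk'
        · have : k = n + 1 := by omega
          rw [this, Pp.extend_P_last Y' f' hf'prec]
          exact hY'S
      · rw [show (le_rfl : n + 1 ≤ n + 1) = le_rfl from rfl]
        rw [comps, comps_extend Pp Y' f' hf'prec n le_rfl]
        have hp : (Pp.extend Y' f' hf'prec).p n (Nat.lt_succ_of_le le_rfl) =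
            eqToHom (Pp.extend_P_eq Y' f' hf'prec le_rfl) ≫ f' ≫
              F.map (eqToHom (Pp.extend_P_last Y' f' hf'prec).symm) := dif_neg (lt_irrefl n)
        rw [hp, pow_succ_map']
        simp only [Functor.map_comp, eqToHom_map, Category.assoc, eqToHom_trans,
          eqToHom_trans_assoc, eqToHom_refl, Category.id_comp, Category.comp_id]
        rw [← hcomp]
        rw [← hfact, Functor.map_comp]
        have key : ∀ {X X' Z Z' W : C} (c : I ⟶ X) (a : X = X') (b : X' = X) (m : X ⟶ Z)
            (cc : Z = Z') (d : Z' = Z) (mm : Z ⟶ W),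
            ((c ≫ eqToHom a) ≫ eqToHom b ≫ m ≫ eqToHom cc) ≫ eqToHom d ≫ mm = c ≫ m ≫ mm := by
          intros; subst_vars; simp
        exact key _ _ _ _ _ _ _

theorem comp_surjective [HasTerminal C] (F : C ⥤ C) (I : C) (S : Set C)
    (hiso : ∀ {X Y : C}, X ∈ S → (X ≅ Y) → Y ∈ S)
    (hF : ∀ {X Y : C} (f : X ⟶ F.obj Y), X ∈ S →
      ∃ (Y' : C) (h : Y' ⟶ Y) (f' : X ⟶ F.obj Y'),
        Y' ∈ S ∧ Precise F f' ∧ f' ≫ F.map h = f)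
    (hI : I ∈ S) (n : ℕ) (u : I ⟶ (pow F n).obj (⊤_ C)) :
    ∃ Pp : FPath F I n, (∀ k, k ≤ n → Pp.P k ∈ S) ∧ Comp Pp = u := by
  obtain ⟨Pp, e, hS, hcomp⟩ := aux_surjective F S hF n I hI (⊤_ C) u
  refine ⟨Pp, hS, ?_⟩
  rw [Comp, terminal.hom_ext (terminal.from (Pp.P n)) e, hcomp]
end

section
/- Every morphism in the path category is componentwise an isomorphism: if (P,p) and (Q,q) are F-paths of lengths n ≤ m and (φ_k : P_k → Q_k)_{k ≤ n} is a path morphism (φ₀ = id_I and q_k ∘ φ_k = F(φ_{k+1}) ∘ p_k for all k < n), then φ_k is an isomorphism for every 0 ≤ k ≤ n. -/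
open CategoryTheory CategoryTheory.Limits

universe v u

variable {C : Type u} [Category.{v} C]

/-!
A path morphism is an isomorphism at `0`, and the commuting square at step `k` turns an
isomorphism `φ k` into a factorisation `q k = (φ k⁻¹ ≫ p k) ≫ F (φ (k+1))` of one precise morphism
through another. Precision of `q k` gives a section `d` of `φ (k+1)`; then `φ (k+1) ≫ d` is an
idempotent fixed by `F` after the precise morphism `φ k⁻¹ ≫ p k`, and precision forces such an
idempotent to be the identity.
-/

namespace Precise

variable {F : C ⥤ C}

lemma comp_of_isIso {S S' R : C} {s : S ⟶ F.obj R} (hs : Precise F s) (a : S' ⟶ S) [IsIso a] :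
    Precise F (a ≫ s) := by
  intro A D f g h hfh
  obtain ⟨d, hsd, hdh⟩ := hs (inv a ≫ f) g h (by simp [hfh])
  exact ⟨d, by simp [hsd], hdh⟩

lemma eq_id_of_idem {S R : C} {p : S ⟶ F.obj R} (hp : Precise F p) {e : R ⟶ R}
    (he : e ≫ e = e) (hpe : p ≫ F.map e = p) : e = 𝟙 R := by
  obtain ⟨d, -, hde⟩ := hp p (𝟙 R) e (by rw [hpe, F.map_id, Category.comp_id])
  calc e = (d ≫ e) ≫ e := by rw [hde, Category.id_comp]
    _ = 𝟙 R := by rw [Category.assoc, he, hde]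

lemma isIso_of_comp_map_eq {S R R' : C} {p : S ⟶ F.obj R} {q : S ⟶ F.obj R'}
    (hp : Precise F p) (hq : Precise F q) {b : R ⟶ R'} (h : p ≫ F.map b = q) : IsIso b := by
  obtain ⟨d, hqd, hdb⟩ := hq p (𝟙 R') b (by rw [h, F.map_id, Category.comp_id])
  have hbd : b ≫ d = 𝟙 R :=
    hp.eq_id_of_idem (by simp [reassoc_of% hdb]) (by rw [F.map_comp, reassoc_of% h, hqd])
  exact ⟨d, hbd, hdb⟩

end Precise

theorem pathMor_componentwise_iso (F : C ⥤ C) (I : C) {n m : ℕ} (hnm : n ≤ m)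
    (Pp : FPath F I n) (Qq : FPath F I m)
    (φ : ∀ k, k ≤ n → (Pp.P k ⟶ Qq.P k))
    (hφ0 : φ 0 (Nat.zero_le n) = eqToHom (Pp.hP0.trans Qq.hP0.symm))
    (hcomm : ∀ k (hk : k < n),
      φ k hk.le ≫ Qq.p k (lt_of_lt_of_le hk hnm) =
        Pp.p k hk ≫ F.map (φ (k + 1) hk)) :
    ∀ k (hk : k ≤ n), IsIso (φ k hk) := by
  intro k
  induction k with
  | zero => intro _; rw [hφ0]; infer_instance
  | succ k ih =>
    intro hk
    have := ih (Nat.le_of_succ_le hk)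
    exact Precise.isIso_of_comp_map_eq
      (Precise.comp_of_isIso (Pp.precise k hk) (inv (φ k _)))
      (Qq.precise k (lt_of_lt_of_le hk hnm))
      (by rw [Category.assoc, ← hcomm, IsIso.inv_hom_id_assoc])
end

section
/- Precise morphisms are essentially unique: if f₁ : X → F Y₁ and f₂ : X → F Y₂ are both F-precise and h : Y₁ → Y₂ satisfies F h ∘ f₁ = f₂, then h is an isomorphism. Consequently, if F admits precise factorizations w.r.t. a class S, f : S → F Y is F-precise and S ∈ S, then Y ∈ S. -/
open CategoryTheory CategoryTheory.Limits

universe v u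

variable {C : Type u} [Category.{v} C]

/-- `F` admits precise factorizations w.r.t. a class `S` of objects. -/
def AdmitsPreciseFact (F : C ⥤ C) (S : Set C) : Prop :=
  ∀ {X Y : C} (f : X ⟶ F.obj Y), X ∈ S →
    ∃ (Y' : C) (h : Y' ⟶ Y) (f' : X ⟶ F.obj Y'),
      Y' ∈ S ∧ Precise F f' ∧ f' ≫ F.map h = f

/-! Write `h : Y₁ ⟶ Y₂` with `f₁ ≫ F.map h = f₂` for two precise morphisms. Precision of `f₂`
gives a section `d` of `h` through which `f₁` factors; precision of `f₁` then splits the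
endomorphism `h ≫ d`, so `d` is epi as well as split mono, hence an isomorphism with inverse `h`. -/

namespace Precise

variable {F : C ⥤ C} {X Y₁ Y₂ : C}

theorem exists_section_of_comp_map_eq {f₁ : X ⟶ F.obj Y₁} {f₂ : X ⟶ F.obj Y₂} {h : Y₁ ⟶ Y₂}
    (hf₂ : Precise F f₂) (hf : f₁ ≫ F.map h = f₂) :
    ∃ d : Y₂ ⟶ Y₁, f₂ ≫ F.map d = f₁ ∧ d ≫ h = 𝟙 Y₂ :=
  hf₂ f₁ (𝟙 Y₂) h (by rw [hf, F.map_id, Category.comp_id])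

theorem isSplitEpi_of_comp_map_eq_self {f : X ⟶ F.obj Y₁} {k : Y₁ ⟶ Y₁}
    (hf : Precise F f) (hk : f ≫ F.map k = f) : IsSplitEpi k := by
  obtain ⟨e, -, hek⟩ := hf f (𝟙 Y₁) k (by rw [hk, F.map_id, Category.comp_id])
  exact IsSplitEpi.mk' ⟨e, hek⟩

theorem isIso_of_comp_map_eq_s8 {f₁ : X ⟶ F.obj Y₁} {f₂ : X ⟶ F.obj Y₂} {h : Y₁ ⟶ Y₂}
    (hf₁ : Precise F f₁) (hf₂ : Precise F f₂) (hf : f₁ ≫ F.map h = f₂) : IsIso h := by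
  obtain ⟨d, hfd, hdh⟩ := hf₂.exists_section_of_comp_map_eq hf
  have : IsSplitEpi (h ≫ d) :=
    hf₁.isSplitEpi_of_comp_map_eq_self (by rw [F.map_comp, reassoc_of% hf, hfd])
  have : Epi d := epi_of_epi h d
  have : IsSplitMono d := IsSplitMono.mk' ⟨h, hdh⟩
  have : IsIso d := isIso_of_epi_of_isSplitMono d
  exact IsIso.of_isIso_fac_left hdh

end Precise

theorem AdmitsPreciseFact.mem_of_precise {F : C ⥤ C} {S : Set C}
    (hS : ∀ {X Y : C}, X ∈ S → (X ≅ Y) → Y ∈ S) (hF : AdmitsPreciseFact F S)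
    {X Y : C} {f : X ⟶ F.obj Y} (hf : Precise F f) (hX : X ∈ S) : Y ∈ S := by
  obtain ⟨Y', h, f', hY', hf', hfac⟩ := hF f hX
  have : IsIso h := hf'.isIso_of_comp_map_eq_s8 hf hfac
  exact hS hY' (asIso h)

/-- Precise morphisms are essentially unique, and consequently the codomain of a
precise morphism out of an `S`-object is again an `S`-object. -/
theorem precise_essentially_unique (F : C ⥤ C) :
    (∀ {X Y₁ Y₂ : C} (f₁ : X ⟶ F.obj Y₁) (f₂ : X ⟶ F.obj Y₂) (h : Y₁ ⟶ Y₂),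
      Precise F f₁ → Precise F f₂ → f₁ ≫ F.map h = f₂ → IsIso h) ∧
    (∀ (S : Set C), (∀ {X Y : C}, X ∈ S → (X ≅ Y) → Y ∈ S) →
      AdmitsPreciseFact F S →
      ∀ {X Y : C} (f : X ⟶ F.obj Y), Precise F f → X ∈ S → Y ∈ S) :=
  ⟨fun _ _ _ hf₁ hf₂ hf => hf₁.isIso_of_comp_map_eq_s8 hf₂ hf,
    fun _ hS hF _ _ _ hf hX => hF.mem_of_precise hS hf hX⟩
end
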